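/- arXiv:1803.08102 — 3 statements merged into one kernel-verified Lean document; each statement's English description precedes it below -/
import Mathlib

section
/- For odd L = 2n+1, the number of permutations of {1,...,L} that are rotations of permutations of the form π = 1, π₂(n+2), [∏_{i=2}^{k} π₁(i) π₂(i+n+1)], (n+1), [∏_{i=k+1}^{n} π₁(i) π₂(i+n+1)] — where π₁ ranges over permutations of {2,...,n}, π₂ over permutations of {n+2,...,2n+1}, and k over {1,...,n} — equals (n!)² (2n+1). -/
/-- Value of the permutation `π₁` of `{2,…,n}` (encoded as a permutation of `Fin (n-1)`)
at the `j`-th element of `{2,…,n}` (0-indexed). -/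
def pi1val (n : ℕ) (p1 : Equiv.Perm (Fin (n - 1))) (j : ℕ) : ℕ :=
  if h : j < n - 1 then (p1 ⟨j, h⟩).val + 2 else 0

/-- Value of the permutation `π₂` of `{n+2,…,2n+1}` (encoded as a permutation of `Fin n`)
at the `j`-th element of `{n+2,…,2n+1}` (0-indexed). -/
def pi2val (n : ℕ) (p2 : Equiv.Perm (Fin n)) (j : ℕ) : ℕ :=
  if h : j < n then (p2 ⟨j, h⟩).val + n + 2 else 0

/-- One-line notation (as a list of length `2n+1`) for the permutation
`π = 1 π₂(n+2) [∏_{i=2}^{k} π₁(i) π₂(i+n+1)] (n+1) [∏_{i=k+1}^{n} π₁(i) π₂(i+n+1)]`. -/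
def buildList (n : ℕ) (p1 : Equiv.Perm (Fin (n - 1))) (p2 : Equiv.Perm (Fin n))
    (k : ℕ) : List ℕ :=
  [1, pi2val n p2 0]
    ++ (((List.range (n - 1)).take (k - 1)).map fun j =>
          [pi1val n p1 j, pi2val n p2 (j + 1)]).flatten
    ++ [n + 1]
    ++ (((List.range (n - 1)).drop (k - 1)).map fun j =>
          [pi1val n p1 j, pi2val n p2 (j + 1)]).flatten

def hfun (n : ℕ) (p1 : Equiv.Perm (Fin (n-1))) (p2 : Equiv.Perm (Fin n)) (j : ℕ) : ℕ :=
  if j = 0 then 1 else if j % 2 = 1 then pi2val n p2 (j / 2) else pi1val n p1 (j / 2 - 1)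

def Gfun (n : ℕ) (p1 : Equiv.Perm (Fin (n-1))) (p2 : Equiv.Perm (Fin n)) (k i : ℕ) : ℕ :=
  if i = 2*k then n+1 else if i < 2*k then hfun n p1 p2 i else hfun n p1 p2 (i-1)

lemma pairsFlatten (a b : ℕ → ℕ) (m : ℕ) :
    ((List.range m).map fun j => [a j, b j]).flatten =
      List.ofFn (fun i : Fin (2*m) => if i.val % 2 = 0 then a (i.val/2) else b (i.val/2)) := by
  induction m with
  | zero => simp
  | succ m ih =>
    rw [List.range_succ, List.map_append, List.flatten_append, ih]
    have h2 : 2 * (m+1) = 2*m + 2 := by ring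
    rw [List.ofFn_congr h2, List.ofFn_add]
    have e0 : (2*m) % 2 = 0 := by omega
    have e1 : (2*m+1) % 2 = 1 := by omega
    have d0 : (2*m) / 2 = m := by omega
    have d1 : (2*m+1) / 2 = m := by omega
    congr 1
    simp [Fin.natAdd, List.ofFn_succ, Fin.cast, e0, e1, d0, d1]

lemma pi1val_bound (n : ℕ) (p1 : Equiv.Perm (Fin (n-1))) (j : ℕ) :
    pi1val n p1 j = 0 ∨ (2 ≤ pi1val n p1 j ∧ pi1val n p1 j ≤ n) := by
  unfold pi1val; split_ifs with h
  · right; have h2 := (p1 ⟨j, h⟩).isLt; omega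
  · left; rfl

lemma pi2val_bound (n : ℕ) (p2 : Equiv.Perm (Fin n)) (j : ℕ) :
    pi2val n p2 j = 0 ∨ (n+2 ≤ pi2val n p2 j ∧ pi2val n p2 j ≤ 2*n+1) := by
  unfold pi2val; split_ifs with h
  · right; have h2 := (p2 ⟨j, h⟩).isLt; omega
  · left; rfl

lemma hfun_ne_one (n : ℕ) (p1 : Equiv.Perm (Fin (n-1))) (p2 : Equiv.Perm (Fin n)) (j : ℕ)
    (hj : j ≠ 0) : hfun n p1 p2 j ≠ 1 := by
  unfold hfun; split_ifs
  · omega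
  · rcases pi2val_bound n p2 (j/2) with h | h <;> omega
  · rcases pi1val_bound n p1 (j/2 - 1) with h | h <;> omega

lemma hfun_ne_mid (n : ℕ) (hn : 1 ≤ n) (p1 : Equiv.Perm (Fin (n-1))) (p2 : Equiv.Perm (Fin n))
    (j : ℕ) : hfun n p1 p2 j ≠ n+1 := by
  unfold hfun; split_ifs
  · omega
  · rcases pi2val_bound n p2 (j/2) with h | h <;> omega
  · rcases pi1val_bound n p1 (j/2 - 1) with h | h <;> omega

lemma Gfun_ne_one (n : ℕ) (hn : 1 ≤ n) (p1 : Equiv.Perm (Fin (n-1))) (p2 : Equiv.Perm (Fin n))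
    (k s : ℕ) (hk1 : 1 ≤ k) (hs : s ≠ 0) : Gfun n p1 p2 k s ≠ 1 := by
  unfold Gfun; split_ifs with h1 h2
  · omega
  · exact hfun_ne_one n p1 p2 s hs
  · exact hfun_ne_one n p1 p2 (s-1) (by omega)

lemma Gfun_ne_mid (n : ℕ) (hn : 1 ≤ n) (p1 : Equiv.Perm (Fin (n-1))) (p2 : Equiv.Perm (Fin n))
    (k j : ℕ) (hj : j ≠ 2*k) : Gfun n p1 p2 k j ≠ n+1 := by
  unfold Gfun; split_ifs with h1 h2
  · omega
  · exact hfun_ne_mid n hn p1 p2 j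
  · exact hfun_ne_mid n hn p1 p2 (j-1)

lemma Gfun_zero (n : ℕ) (p1 : Equiv.Perm (Fin (n-1))) (p2 : Equiv.Perm (Fin n)) (k : ℕ)
    (hk1 : 1 ≤ k) : Gfun n p1 p2 k 0 = 1 := by
  simp [Gfun, hfun, (show (0:ℕ) ≠ 2*k by omega), (show 0 < 2*k by omega)]

lemma Gfun_mid (n : ℕ) (p1 : Equiv.Perm (Fin (n-1))) (p2 : Equiv.Perm (Fin n)) (k : ℕ) :
    Gfun n p1 p2 k (2*k) = n+1 := by simp [Gfun]
lemma buildList_eq (n : ℕ) (p1 : Equiv.Perm (Fin (n-1))) (p2 : Equiv.Perm (Fin n)) (k : ℕ)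
    (hk1 : 1 ≤ k) (hkn : k ≤ n) :
    buildList n p1 p2 k = List.ofFn (fun i : Fin (2*n+1) => Gfun n p1 p2 k i.val) := by
  have htake : (List.range (n-1)).take (k-1) = List.range (k-1) := by
    rw [List.take_range]; congr 1; omega
  have hdrop : (List.range (n-1)).drop (k-1) = (List.range (n-k)).map (fun j => (k-1) + j) := by
    have hsplit : List.range (n-1) = List.range (k-1) ++ (List.range (n-k)).map (fun j => (k-1)+j) := by
      rw [← List.range_add]; congr 1; omega
    rw [hsplit, List.drop_left' (by simp)]
  unfold buildList
  rw [htake, hdrop, List.map_map]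
  rw [pairsFlatten (fun j => pi1val n p1 j) (fun j => pi2val n p2 (j+1)) (k-1)]
  rw [show ((fun j => [pi1val n p1 j, pi2val n p2 (j + 1)]) ∘ fun j => k - 1 + j)
    = (fun j => [pi1val n p1 (k-1+j), pi2val n p2 ((k-1+j) + 1)]) from rfl]
  rw [pairsFlatten (fun j => pi1val n p1 (k-1+j)) (fun j => pi2val n p2 ((k-1+j)+1)) (n-k)]
  apply List.ext_getElem
  · simp; omega
  · intro i h1 h2
    simp only [List.getElem_append, List.getElem_ofFn, List.length_append, List.length_ofFn,
      List.length_cons, List.length_nil]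
    by_cases hi0 : i = 0
    · subst hi0
      simp [Gfun, hfun, (show (0:ℕ) ≠ 2*k by omega), (show 0 < 2*k by omega)]
    by_cases hi1 : i = 1
    · subst hi1
      simp [Gfun, hfun, (show (1:ℕ) ≠ 2*k by omega), (show 1 < 2*k by omega),
        (show ¬(2 + 2*(k-1) ≤ 1) by omega)]
    simp only [Gfun, hfun, List.getElem_singleton]
    split_ifs <;> first
      | rfl
      | omega
      | (congr 1; omega)
lemma F_inj (n : ℕ) (hn : 1 ≤ n) :
    Function.Injective (fun q : Equiv.Perm (Fin (n-1)) × Equiv.Perm (Fin n) × Fin n × Fin (2*n+1) =>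
      (buildList n q.1 q.2.1 (q.2.2.1.val+1)).rotate q.2.2.2.val) := by
  rintro ⟨p1, p2, k0, r0⟩ ⟨q1, q2, k0', r0'⟩ h
  simp only at h
  have hk0 := k0.isLt
  have hk0' := k0'.isLt
  have hr0 := r0.isLt
  have hr0' := r0'.isLt
  set k := k0.val + 1 with hkdef
  set k' := k0'.val + 1 with hkdef'
  rw [buildList_eq n p1 p2 k (by omega) (by omega),
      buildList_eq n q1 q2 k' (by omega) (by omega)] at h
  set A := List.ofFn (fun i : Fin (2*n+1) => Gfun n p1 p2 k i.val) with hA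
  set B := List.ofFn (fun i : Fin (2*n+1) => Gfun n q1 q2 k' i.val) with hB
  have hLa : A.length = 2*n+1 := by simp [hA]
  have hLb : B.length = 2*n+1 := by simp [hB]
  set s := (r0'.val + (2*n+1 - r0.val)) % (2*n+1) with hs
  have hsL : s < 2*n+1 := Nat.mod_lt _ (by omega)
  have h6 : A = B.rotate s := by
    have h4 : A.rotate (r0.val + (2*n+1 - r0.val)) = B.rotate (r0'.val + (2*n+1 - r0.val)) := by
      rw [← List.rotate_rotate, ← List.rotate_rotate, h]
    rw [show r0.val + (2*n+1 - r0.val) = 2*n+1 by omega] at h4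
    have h4' : A.rotate A.length = A := List.rotate_length A
    rw [hLa] at h4'
    rw [h4'] at h4
    have h5 : B.rotate ((r0'.val + (2*n+1 - r0.val)) % B.length)
        = B.rotate (r0'.val + (2*n+1 - r0.val)) := List.rotate_mod B _
    rw [hLb] at h5
    rw [hs, h5]
    exact h4
  have hpt : ∀ j, j < 2*n+1 → Gfun n p1 p2 k j = Gfun n q1 q2 k' ((j + s) % (2*n+1)) := by
    intro j hj
    have hjA : j < A.length := by omega
    have h7 := List.getElem_of_eq h6 hjA
    rw [List.getElem_rotate] at h7
    simp only [hA, hB, List.length_ofFn, List.getElem_ofFn] at h7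
    exact h7
  have hs0 : s = 0 := by
    by_contra hne
    have h1 := hpt 0 (by omega)
    rw [Gfun_zero n p1 p2 k (by omega), Nat.zero_add, Nat.mod_eq_of_lt hsL] at h1
    exact Gfun_ne_one n hn q1 q2 k' s (by omega) hne h1.symm
  have hpt2 : ∀ j, j < 2*n+1 → Gfun n p1 p2 k j = Gfun n q1 q2 k' j := by
    intro j hj
    have := hpt j hj
    rwa [hs0, Nat.add_zero, Nat.mod_eq_of_lt hj] at this
  have hkk : k = k' := by
    have h1 := hpt2 (2*k) (by omega)
    rw [Gfun_mid] at h1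
    by_contra hne
    exact Gfun_ne_mid n hn q1 q2 k' (2*k) (by omega) h1.symm
  have hH : ∀ j, j < 2*n → hfun n p1 p2 j = hfun n q1 q2 j := by
    intro j hj
    by_cases hj2 : j < 2*k
    · have := hpt2 j (by omega)
      rw [← hkk] at this
      simpa [Gfun, (show j ≠ 2*k by omega), hj2] using this
    · have := hpt2 (j+1) (by omega)
      rw [← hkk] at this
      simpa [Gfun, (show ¬(j+1 = 2*k) by omega), (show ¬(j+1 < 2*k) by omega)] using this
  have hp2 : p2 = q2 := by
    apply Equiv.ext; intro x
    have hx := x.isLt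
    have h9 := hH (2*x.val+1) (by omega)
    simp only [hfun, pi2val, (show 2*x.val+1 ≠ 0 by omega), if_false,
      (show (2*x.val+1) % 2 = 1 by omega), if_true, (show (2*x.val+1)/2 = x.val by omega),
      dif_pos hx, eq_self_iff_true] at h9
    simp only [Fin.eta] at h9
    exact Fin.ext (by omega)
  have hp1 : p1 = q1 := by
    apply Equiv.ext; intro x
    have hx := x.isLt
    have h9 := hH (2*x.val+2) (by omega)
    simp only [hfun, pi1val, (show 2*x.val+2 ≠ 0 by omega), if_false,
      (show ¬((2*x.val+2) % 2 = 1) by omega), (show (2*x.val+2)/2 - 1 = x.val by omega),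
      dif_pos hx, eq_self_iff_true] at h9
    simp only [Fin.eta] at h9
    exact Fin.ext (by omega)
  have hrr : r0.val = r0'.val := by
    rw [hs0] at hs
    by_cases hc : r0'.val + (2*n+1 - r0.val) < 2*n+1
    · rw [Nat.mod_eq_of_lt hc] at hs; omega
    · rw [Nat.mod_eq_sub_mod (by omega), Nat.mod_eq_of_lt (by omega)] at hs
      omega
  simp only [Prod.mk.injEq]
  exact ⟨hp1, hp2, Fin.ext (by omega), Fin.ext hrr⟩

/-- For odd `L = 2n+1`, the number of permutations of `{1,…,L}` (in
one-line notation) that are rotations (`τ(i) = π(i + r mod L)`, i.e. rotations of the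
one-line list) of permutations of the form
`π = 1 π₂(n+2) [∏_{i=2}^{k} π₁(i) π₂(i+n+1)] (n+1) [∏_{i=k+1}^{n} π₁(i) π₂(i+n+1)]`,
where `π₁` ranges over permutations of `{2,…,n}`, `π₂` over permutations of
`{n+2,…,2n+1}` and `k` over `{1,…,n}`, equals `(n!)² (2n+1)`. -/
theorem stmt3 (n : ℕ) (hn : 1 ≤ n) :
    Set.ncard { l : List ℕ |
        ∃ (p1 : Equiv.Perm (Fin (n - 1))) (p2 : Equiv.Perm (Fin n)) (k r : ℕ),
          1 ≤ k ∧ k ≤ n ∧ r < 2 * n + 1 ∧ l = (buildList n p1 p2 k).rotate r } =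
      (n.factorial) ^ 2 * (2 * n + 1) := by
  have hset : { l : List ℕ |
        ∃ (p1 : Equiv.Perm (Fin (n - 1))) (p2 : Equiv.Perm (Fin n)) (k r : ℕ),
          1 ≤ k ∧ k ≤ n ∧ r < 2 * n + 1 ∧ l = (buildList n p1 p2 k).rotate r }
      = Set.range (fun q : Equiv.Perm (Fin (n-1)) × Equiv.Perm (Fin n) × Fin n × Fin (2*n+1) =>
          (buildList n q.1 q.2.1 (q.2.2.1.val+1)).rotate q.2.2.2.val) := by
    ext l
    simp only [Set.mem_setOf_eq, Set.mem_range]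
    constructor
    · rintro ⟨p1, p2, k, r, hk1, hkn, hr, rfl⟩
      refine ⟨⟨p1, p2, ⟨k-1, by omega⟩, ⟨r, hr⟩⟩, ?_⟩
      show (buildList n p1 p2 (k-1+1)).rotate r = _
      rw [show k - 1 + 1 = k by omega]
    · rintro ⟨⟨p1, p2, k0, r0⟩, rfl⟩
      exact ⟨p1, p2, k0.val+1, r0.val, by omega, by have := k0.isLt; omega, r0.isLt, rfl⟩
  rw [hset, ← Nat.card_coe_set_eq, Nat.card_range_of_injective (F_inj n hn)]
  simp only [Nat.card_eq_fintype_card, Fintype.card_prod, Fintype.card_perm, Fintype.card_fin]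
  rw [pow_two, ← Nat.mul_factorial_pred (by omega : n ≠ 0)]
  ring
end

section
/- If there exist cut locations such that one application of the IET with permutation π to the two-color initial condition creates L-1 new interfaces, then for every N ≥ 1 there exist cut locations c_{N,j} such that the variable IET creates L-1 new interfaces at every one of the N iterations; in particular, the colors of the left and right edges of the cut pieces can be chosen to equal (or be the simultaneous complement of) those in the first iteration. -/
/-- Number of color interfaces of a coloring of the circle, given as the (cyclic) list of
colors of consecutive subintervals (with the two endpoints of the line identified). -/
def cyclicInterfaces (l : List ℕ) : ℕ :=
  ((List.range l.length).filter fun i =>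
    l.getD i 0 ≠ l.getD ((i + 1) % l.length) 0).length

/-- A coloring of (an interval of) the line is a list of (color, length) pairs.
`stepFun l x` is the color at distance `x` from the left end. -/
noncomputable def stepFun : List (ℕ × ℝ) → ℝ → ℕ
  | [], _ => 0
  | (c, len) :: t, x => if x < len then c else stepFun t (x - len)

def totalLen (l : List (ℕ × ℝ)) : ℝ := (l.map Prod.snd).sum

/-- Two segment lists describe the same coloring of the same interval. -/
def SameColoring (a b : List (ℕ × ℝ)) : Prop :=
  totalLen a = totalLen b ∧ ∀ x, stepFun a x = stepFun b x

/-- Number of interfaces (equivalently, of monochromatic segments) of a coloring,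
with periodic boundary conditions. -/
def numIntf (l : List (ℕ × ℝ)) : ℕ := cyclicInterfaces (l.map Prod.fst)

/-- One iteration of an IET with `L` pieces and permutation `π`: the coloring `a` is cut
(at arbitrary locations) into `L` nonempty pieces of positive lengths, which are
rearranged according to `π` to produce the coloring `b`. -/
def IETStep (L : ℕ) (π : Equiv.Perm (Fin L)) (a b : List (ℕ × ℝ)) : Prop :=
  ∃ pieces : Fin L → List (ℕ × ℝ),
    (∀ j, pieces j ≠ []) ∧
    (∀ j, ∀ p ∈ pieces j, 0 < p.2) ∧
    SameColoring ((List.ofFn fun j => pieces j).flatten) a ∧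
    b = (List.ofFn fun j => pieces (π j)).flatten

/-- The two-color initial condition: black (`0`) on `[0,1/2)`, gray (`1`) on `[1/2,1)`. -/
noncomputable def twoColorInit : List (ℕ × ℝ) := [(0, 1 / 2), (1, 1 / 2)]



namespace S5


/-- number of adjacent color changes in a list -/
def chg : List ℕ → ℕ
  | [] => 0
  | [_] => 0
  | a :: b :: t => (if a ≠ b then 1 else 0) + chg (b :: t)

@[simp] lemma chg_nil : chg [] = 0 := rfl
@[simp] lemma chg_single (a : ℕ) : chg [a] = 0 := rfl
lemma chg_cons_cons (a b : ℕ) (t : List ℕ) :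
    chg (a :: b :: t) = (if a ≠ b then 1 else 0) + chg (b :: t) := rfl

lemma headD_eq_getD (l : List ℕ) (d : ℕ) : l.headD d = l.getD 0 d := by
  cases l <;> rfl

lemma getLastD_default_irrel (l : List ℕ) (h : l ≠ []) (d d' : ℕ) :
    l.getLastD d = l.getLastD d' := by
  rw [List.getLastD_eq_getLast?, List.getLastD_eq_getLast?]
  cases hl : l.getLast? with
  | none => exact absurd (List.getLast?_eq_none_iff.mp hl) h
  | some x => rfl

lemma getLastD_eq_getD (l : List ℕ) (d : ℕ) (h : l ≠ []) :
    l.getLastD d = l.getD (l.length - 1) d := by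
  induction l generalizing d with
  | nil => simp at h
  | cons a t ih =>
    cases t with
    | nil => rfl
    | cons b t2 =>
      rw [List.getLastD_cons, getLastD_default_irrel _ (by simp) a d, ih d (by simp)]
      simp [List.getD_cons_succ]

lemma chg_eq_countP (l : List ℕ) :
    chg l = (List.range (l.length - 1)).countP
      (fun i => decide (l.getD i 0 ≠ l.getD (i + 1) 0)) := by
  induction l with
  | nil => simp
  | cons a t ih =>
    cases t with
    | nil => simp
    | cons b t2 =>
      rw [chg_cons_cons, ih]
      have hlen : (a :: b :: t2).length - 1 = ((b :: t2).length - 1) + 1 := by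
        simp
      rw [hlen, List.range_succ_eq_map, List.countP_cons, List.countP_map]
      have h2 : (List.countP ((fun i => decide ((a :: b :: t2).getD i 0 ≠ (a :: b :: t2).getD (i + 1) 0)) ∘ Nat.succ)
          (List.range ((b :: t2).length - 1)))
          = (List.range ((b :: t2).length - 1)).countP
          (fun i => decide ((b :: t2).getD i 0 ≠ (b :: t2).getD (i + 1) 0)) := by
        apply List.countP_congr
        intro i _
        simp only [Function.comp_apply, Nat.succ_eq_add_one, List.getD_cons_succ]
      rw [h2]
      have h3 : (a :: b :: t2).getD 0 0 = a := rfl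
      have h4 : (a :: b :: t2).getD (0 + 1) 0 = b := rfl
      rw [h3, h4]
      by_cases hab : a = b <;> simp [hab] <;> omega

lemma cyclic_eq (l : List ℕ) (h : l ≠ []) :
    cyclicInterfaces l = chg l + (if l.getLastD 0 ≠ l.headD 0 then 1 else 0) := by
  obtain ⟨m, hm⟩ : ∃ m, l.length = m + 1 := ⟨l.length - 1, by
    have := List.length_pos_iff.mpr h; omega⟩
  rw [cyclicInterfaces, ← List.countP_eq_length_filter, hm, List.range_succ,
    List.countP_append]
  have h1 : (List.range m).countP (fun i => decide (l.getD i 0 ≠ l.getD ((i + 1) % (m+1)) 0))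
      = (List.range m).countP (fun i => decide (l.getD i 0 ≠ l.getD (i + 1) 0)) := by
    apply List.countP_congr
    intro i hi
    rw [List.mem_range] at hi
    rw [Nat.mod_eq_of_lt (by omega)]
  have h2 : chg l = (List.range m).countP (fun i => decide (l.getD i 0 ≠ l.getD (i + 1) 0)) := by
    rw [chg_eq_countP, hm]; norm_num
  rw [h1, ← h2]
  have h3 : ((m + 1) % (m + 1)) = 0 := Nat.mod_self _
  have h4 : l.getD m 0 = l.getLastD 0 := by rw [getLastD_eq_getD l 0 h, hm]; norm_num
  have h5 : l.getD 0 0 = l.headD 0 := (headD_eq_getD l 0).symm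
  simp only [List.countP_cons, List.countP_nil, h3, h4, h5]
  by_cases hne : l.getLastD 0 ≠ l.headD 0 <;> simp [hne]
lemma chg_cons_le (a : ℕ) (l : List ℕ) : chg (a :: l) ≤ 1 + chg l := by
  cases l with
  | nil => simp [chg]
  | cons b t => rw [chg_cons_cons]; split <;> omega

lemma chg_le_cons (a : ℕ) (l : List ℕ) : chg l ≤ chg (a :: l) := by
  cases l with
  | nil => simp [chg]
  | cons b t => rw [chg_cons_cons]; omega

lemma chg_sublist_cons {l' l : List ℕ} (h : List.Sublist l' l) (a : ℕ) :
    chg (a :: l') ≤ chg (a :: l) := by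
  induction h generalizing a with
  | slnil => exact le_refl _
  | cons b hs ih =>
    rename_i l₁ l₂
    rw [chg_cons_cons]
    by_cases hab : a = b
    · subst hab; simpa using ih a
    · have h1 : chg (a :: l₁) ≤ 1 + chg l₁ := chg_cons_le _ _
      have h2 : chg l₁ ≤ chg (b :: l₁) := chg_le_cons _ _
      have h3 : chg (b :: l₁) ≤ chg (b :: l₂) := ih b
      simp [hab]; omega
  | cons_cons b hs ih =>
    rename_i l₁ l₂
    rw [chg_cons_cons, chg_cons_cons]
    exact Nat.add_le_add_left (ih b) _

lemma chg_of_chain' {l : List ℕ} (h : l ≠ []) (hc : List.Chain' (· ≠ ·) l) :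
    chg l + 1 = l.length := by
  induction l with
  | nil => simp at h
  | cons a t ih =>
    cases t with
    | nil => simp [chg]
    | cons b t2 =>
      simp only [List.Chain', List.isChain_cons_cons] at hc
      rw [chg_cons_cons, if_pos hc.1]
      have := ih (by simp) hc.2
      simp at this ⊢
      omega

lemma chg_le {l : List ℕ} (h : l ≠ []) : chg l + 1 ≤ l.length := by
  induction l with
  | nil => simp at h
  | cons a t ih =>
    cases t with
    | nil => simp [chg]
    | cons b t2 =>
      rw [chg_cons_cons]
      have := ih (by simp)
      simp at this ⊢
      split <;> omega

lemma chg_append {u v : List ℕ} (hu : u ≠ []) (hv : v ≠ []) :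
    chg (u ++ v) = chg u + chg v + (if u.getLastD 0 ≠ v.headD 0 then 1 else 0) := by
  induction u with
  | nil => simp at hu
  | cons a t ih =>
    cases t with
    | nil =>
      cases v with
      | nil => simp at hv
      | cons b w =>
        have h1 : ([a] : List ℕ).getLastD 0 = a := rfl
        simp only [List.singleton_append, chg_cons_cons, chg_single, h1, List.headD_cons]
        omega
    | cons a2 t2 =>
      have hne : a2 :: t2 ≠ [] := by simp
      have : (a :: a2 :: t2) ++ v = a :: ((a2 :: t2) ++ v) := rfl
      rw [this]
      have hcons : (a2 :: t2) ++ v = a2 :: (t2 ++ v) := rfl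
      rw [hcons, chg_cons_cons, ← hcons, ih hne, chg_cons_cons]
      have hlast : (a :: a2 :: t2).getLastD 0 = (a2 :: t2).getLastD 0 := by
        rw [List.getLastD_cons]
        rw [List.getLastD_eq_getLast?, List.getLastD_eq_getLast?]
        cases hl : (a2 :: t2).getLast? with
        | none => exact absurd (List.getLast?_eq_none_iff.mp hl) hne
        | some x => rfl
      rw [hlast]
      omega
def jsum : List (List ℕ) → ℕ
  | [] => 0
  | [_] => 0
  | u :: v :: t => (if u.getLastD 0 ≠ v.headD 0 then 1 else 0) + jsum (v :: t)

lemma jsum_cons_cons (u v : List ℕ) (t : List (List ℕ)) :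
    jsum (u :: v :: t) = (if u.getLastD 0 ≠ v.headD 0 then 1 else 0) + jsum (v :: t) := rfl

lemma flatten_ne_nil {ll : List (List ℕ)} (h : ll ≠ []) (h2 : ∀ u ∈ ll, u ≠ []) :
    ll.flatten ≠ [] := by
  cases ll with
  | nil => simp at h
  | cons u t =>
    have hu : u ≠ [] := h2 u (by simp)
    simp only [List.flatten_cons]
    intro hc
    exact hu (List.append_eq_nil_iff.mp hc).1

lemma headD_append {u : List ℕ} (v : List ℕ) (hu : u ≠ []) (d : ℕ) :
    (u ++ v).headD d = u.headD d := by
  cases u with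
  | nil => simp at hu
  | cons a t => rfl

lemma getLastD_append (u : List ℕ) {v : List ℕ} (hv : v ≠ []) (d : ℕ) :
    (u ++ v).getLastD d = v.getLastD d := by
  induction u with
  | nil => rfl
  | cons a t ih =>
    have h1 : (a :: t) ++ v = a :: (t ++ v) := rfl
    have h2 : t ++ v ≠ [] := by
      intro hc; exact hv (List.append_eq_nil_iff.mp hc).2
    rw [h1, List.getLastD_cons, getLastD_default_irrel _ h2 a d, ih]

lemma headD_flatten {ll : List (List ℕ)} (h2 : ∀ u ∈ ll, u ≠ []) (d : ℕ) :
    ll.flatten.headD d = (ll.map (fun u => u.headD d)).headD d := by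
  cases ll with
  | nil => rfl
  | cons u t =>
    simp only [List.flatten_cons, List.map_cons, List.headD_cons]
    exact headD_append _ (h2 u (by simp)) d

lemma getLastD_flatten {ll : List (List ℕ)} (h2 : ∀ u ∈ ll, u ≠ []) (d : ℕ) :
    ll.flatten.getLastD d = (ll.map (fun u => u.getLastD d)).getLastD d := by
  induction ll with
  | nil => rfl
  | cons u t ih =>
    cases t with
    | nil => simp
    | cons v t2 =>
      have h2' : ∀ w ∈ v :: t2, w ≠ [] := fun w hw => h2 w (by simp at hw ⊢; tauto)
      have hne : (v :: t2).flatten ≠ [] := flatten_ne_nil (by simp) h2'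
      have hfl : (u :: v :: t2).flatten = u ++ (v :: t2).flatten := rfl
      rw [hfl, getLastD_append _ hne, ih h2']
      have hmapfl : (u :: v :: t2).map (fun u => u.getLastD d)
          = u.getLastD d :: (v :: t2).map (fun u => u.getLastD d) := rfl
      rw [hmapfl, List.getLastD_cons, getLastD_default_irrel _ (by simp) (u.getLastD d) d]

lemma chg_flatten {ll : List (List ℕ)} (h2 : ∀ u ∈ ll, u ≠ []) :
    chg ll.flatten = (ll.map chg).sum + jsum ll := by
  induction ll with
  | nil => simp [chg, jsum]
  | cons u t ih =>
    cases t with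
    | nil => simp [jsum]
    | cons v t2 =>
      have hu : u ≠ [] := h2 u (by simp)
      have h2' : ∀ w ∈ v :: t2, w ≠ [] := fun w hw => h2 w (by simp at hw ⊢; tauto)
      have hne : (v :: t2).flatten ≠ [] := flatten_ne_nil (by simp) h2'
      have hrec := ih h2'
      have hfl : (u :: v :: t2).flatten = u ++ (v :: t2).flatten := rfl
      rw [hfl, chg_append hu hne, hrec]
      have hhead : ((v :: t2).flatten).headD 0 = v.headD 0 := by
        have : (v :: t2).flatten = v ++ t2.flatten := rfl
        rw [this]
        exact headD_append _ (h2 v (by simp)) 0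
      rw [hhead, jsum_cons_cons]
      simp only [List.map_cons, List.sum_cons]
      ring

lemma jsum_le {ll : List (List ℕ)} (h : ll ≠ []) : jsum ll + 1 ≤ ll.length := by
  induction ll with
  | nil => simp at h
  | cons u t ih =>
    cases t with
    | nil => simp [jsum]
    | cons v t2 =>
      rw [jsum_cons_cons]
      have := ih (by simp)
      simp only [List.length_cons] at this ⊢
      split <;> omega

lemma jsum_zero {ll : List (List ℕ)} (h : jsum ll = 0) :
    List.Chain' (fun u v => u.getLastD 0 = v.headD 0) ll := by
  induction ll with
  | nil => exact List.isChain_nil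
  | cons u t ih =>
    cases t with
    | nil => exact List.isChain_singleton _
    | cons v t2 =>
      rw [jsum_cons_cons] at h
      simp only [List.Chain', List.isChain_cons_cons]
      constructor
      · by_cases hcc : u.getLastD 0 = v.headD 0
        · exact hcc
        · rw [if_pos hcc] at h; omega
      · apply ih; omega

lemma jsum_max {ll : List (List ℕ)} (h : jsum ll + 1 = ll.length) :
    List.Chain' (fun u v => u.getLastD 0 ≠ v.headD 0) ll := by
  induction ll with
  | nil => exact List.isChain_nil
  | cons u t ih =>
    cases t with
    | nil => exact List.isChain_singleton _
    | cons v t2 =>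
      rw [jsum_cons_cons] at h
      have hb := jsum_le (ll := v :: t2) (by simp)
      simp only [List.Chain', List.isChain_cons_cons]
      simp only [List.length_cons] at h hb
      by_cases hcc : u.getLastD 0 ≠ v.headD 0
      · rw [if_pos hcc] at h
        exact ⟨hcc, ih (by simp only [List.length_cons]; omega)⟩
      · rw [if_neg hcc] at h
        have hb' : jsum (v :: t2) + 1 ≤ t2.length + 1 := by simpa using hb
        omega

lemma chain'_flatten {ll : List (List ℕ)} (h2 : ∀ u ∈ ll, u ≠ [])
    (hc : ∀ u ∈ ll, List.Chain' (· ≠ ·) u)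
    (hj : List.Chain' (fun u v => u.getLastD 0 ≠ v.headD 0) ll) :
    List.Chain' (α := ℕ) (· ≠ ·) ll.flatten := by
  induction ll with
  | nil => exact List.isChain_nil
  | cons u t ih =>
    cases t with
    | nil => simpa using hc u (by simp)
    | cons v t2 =>
      have h2' : ∀ w ∈ v :: t2, w ≠ [] := fun w hw => h2 w (by simp at hw ⊢; tauto)
      have hfl : (u :: v :: t2).flatten = u ++ (v :: t2).flatten := rfl
      rw [hfl]
      simp only [List.Chain', List.isChain_append]
      refine ⟨hc u (by simp), ?_, ?_⟩
      · exact ih h2' (fun w hw => hc w (by simp at hw ⊢; tauto))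
          (List.isChain_cons_cons.mp hj).2
      · intro x hx y hy
        simp only [List.Chain', List.isChain_cons_cons] at hj
        have hlast : u.getLastD 0 = x := by
          rw [List.getLastD_eq_getLast?, Option.mem_def.mp hx]; rfl
        have hhead : ((v :: t2).flatten).headD 0 = y := by
          rw [List.headD_eq_head?, Option.mem_def.mp hy]; rfl
        have hv : ((v :: t2).flatten).headD 0 = v.headD 0 := by
          have : (v :: t2).flatten = v ++ t2.flatten := rfl
          rw [this]; exact headD_append _ (h2 v (by simp)) 0
        rw [← hlast, ← hhead, hv]
        exact hj.1

lemma heads_sublist {ll : List (List ℕ)} (h2 : ∀ u ∈ ll, u ≠ []) :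
    List.Sublist (ll.map (fun u => u.headD 0)) ll.flatten := by
  induction ll with
  | nil => simp
  | cons u t ih =>
    cases u with
    | nil => exact absurd rfl (h2 [] (by simp))
    | cons a u' =>
      simp only [List.map_cons, List.headD_cons, List.flatten_cons, List.cons_append]
      apply List.Sublist.cons₂
      exact (ih (fun w hw => h2 w (by simp [hw]))).trans (List.sublist_append_right u' _)

lemma chg_heads_le {ll : List (List ℕ)} (h2 : ∀ u ∈ ll, u ≠ []) {k : ℕ}
    (h : chg ll.flatten ≤ k) : chg (ll.map (fun u => u.headD 0)) ≤ k := by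
  cases ll with
  | nil => simpa [chg] using h
  | cons u t =>
    cases u with
    | nil => exact absurd rfl (h2 [] (by simp))
    | cons a u' =>
      have hsub : List.Sublist (t.map (fun u => u.headD 0)) (u' ++ t.flatten) :=
        (heads_sublist (fun w hw => h2 w (by simp [hw]))).trans
          (List.sublist_append_right u' _)
      have := chg_sublist_cons hsub a
      simp only [List.map_cons, List.headD_cons, List.flatten_cons, List.cons_append] at h ⊢
      omega

lemma stepFun_cons (c : ℕ) (len : ℝ) (t : List (ℕ × ℝ)) (x : ℝ) :
    stepFun ((c, len) :: t) x = if x < len then c else stepFun t (x - len) := rfl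

@[simp] lemma totalLen_nil : totalLen [] = 0 := rfl
lemma totalLen_cons (p : ℕ × ℝ) (t : List (ℕ × ℝ)) :
    totalLen (p :: t) = p.2 + totalLen t := by
  simp [totalLen]

lemma totalLen_nonneg {l : List (ℕ × ℝ)} (h : ∀ p ∈ l, 0 < p.2) : 0 ≤ totalLen l := by
  induction l with
  | nil => simp
  | cons p t ih =>
    rw [totalLen_cons]
    have := h p (by simp)
    have := ih (fun q hq => h q (by simp [hq]))
    linarith

lemma totalLen_pos {l : List (ℕ × ℝ)} (h : ∀ p ∈ l, 0 < p.2) (hne : l ≠ []) :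
    0 < totalLen l := by
  cases l with
  | nil => simp at hne
  | cons p t =>
    rw [totalLen_cons]
    have := h p (by simp)
    have := totalLen_nonneg (fun q hq => h q (List.mem_cons_of_mem p hq))
    linarith

lemma stepFun_shift (c : ℕ) (len : ℝ) (t : List (ℕ × ℝ)) {x : ℝ} (hx : 0 ≤ x) :
    stepFun ((c, len) :: t) (x + len) = stepFun t x := by
  rw [stepFun_cons, if_neg (by linarith), add_sub_cancel_right]

lemma T_eval (y : ℝ) :
    stepFun twoColorInit y = if y < 1/2 then 0 else if y < 1 then 1 else 0 := by
  show (if y < 1/2 then 0 else if y - 1/2 < 1/2 then 1 else stepFun [] (y - 1/2 - 1/2)) = _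
  by_cases h1 : y < 1/2
  · rw [if_pos h1, if_pos h1]
  · rw [if_neg h1, if_neg h1]
    by_cases h2 : y < 1
    · rw [if_pos (by linarith), if_pos h2]
    · rw [if_neg (by linarith), if_neg h2]; rfl

lemma T_mem (y : ℝ) : stepFun twoColorInit y = 0 ∨ stepFun twoColorInit y = 1 := by
  rw [T_eval]; split_ifs <;> simp

lemma totalLen_T : totalLen twoColorInit = 1 := by
  simp [twoColorInit, totalLen]; norm_num

-- SameColoring lemmas
lemma SC_refl (a : List (ℕ × ℝ)) : SameColoring a a := ⟨rfl, fun _ => rfl⟩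
lemma SC_trans {a b c : List (ℕ × ℝ)} (h1 : SameColoring a b) (h2 : SameColoring b c) :
    SameColoring a c := ⟨h1.1.trans h2.1, fun x => (h1.2 x).trans (h2.2 x)⟩

lemma SC_cons {t t' : List (ℕ × ℝ)} (c : ℕ) (len : ℝ) (h : SameColoring t t') :
    SameColoring ((c, len) :: t) ((c, len) :: t') := by
  refine ⟨by rw [totalLen_cons, totalLen_cons, h.1], fun x => ?_⟩
  rw [stepFun_cons, stepFun_cons]
  split
  · rfl
  · exact h.2 _

lemma SC_merge {u v : ℝ} (hu : 0 ≤ u) (hv : 0 ≤ v) (c : ℕ) (r : List (ℕ × ℝ)) :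
    SameColoring ((c, u) :: (c, v) :: r) ((c, u + v) :: r) := by
  refine ⟨by rw [totalLen_cons, totalLen_cons, totalLen_cons]; ring, fun x => ?_⟩
  rw [stepFun_cons, stepFun_cons, stepFun_cons]
  by_cases h1 : x < u
  · rw [if_pos h1, if_pos (by linarith)]
  · rw [if_neg h1]
    by_cases h2 : x - u < v
    · rw [if_pos h2, if_pos (by linarith)]
    · rw [if_neg h2, if_neg (by linarith)]
      ring_nf

-- analytic lemmas about colorings of twoColorInit
lemma head_color_eq {w : List (ℕ × ℝ)} (hw : w ≠ []) (hpos : ∀ p ∈ w, 0 < p.2)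
    {o : ℝ} (hyp : ∀ x, 0 ≤ x → stepFun w x = stepFun twoColorInit (x + o)) :
    (w.map Prod.fst).headD 0 = stepFun twoColorInit o := by
  cases w with
  | nil => simp at hw
  | cons p t =>
    obtain ⟨c, len⟩ := p
    have h0 := hyp 0 le_rfl
    rw [stepFun_cons, if_pos (hpos (c, len) (by simp)), zero_add] at h0
    simpa using h0

lemma shift_hyp {c : ℕ} {len : ℝ} {t : List (ℕ × ℝ)} {o : ℝ} (hlen : 0 < len)
    (hyp : ∀ x, 0 ≤ x → stepFun ((c, len) :: t) x = stepFun twoColorInit (x + o)) :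
    ∀ x, 0 ≤ x → stepFun t x = stepFun twoColorInit (x + (o + len)) := by
  intro x hx
  have h := hyp (x + len) (by linarith)
  rw [stepFun_shift c len t hx] at h
  rw [h]
  ring_nf


lemma colors_mem : ∀ (w : List (ℕ × ℝ)) (o : ℝ),
    (∀ p ∈ w, 0 < p.2) →
    (∀ x, 0 ≤ x → stepFun w x = stepFun twoColorInit (x + o)) →
    ∀ p ∈ w, p.1 = 0 ∨ p.1 = 1 := by
  intro w
  induction w with
  | nil => intro o _ _ p hp; simp at hp
  | cons q t ih =>
    intro o hpos hyp p hp
    obtain ⟨c, len⟩ := q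
    have hlen : 0 < len := hpos (c, len) (by simp)
    rcases List.mem_cons.mp hp with h | h
    · have h0 := hyp 0 le_rfl
      rw [stepFun_cons, if_pos hlen, zero_add] at h0
      subst h
      simpa [h0] using T_mem o
    · exact ih (o + len) (fun q hq => hpos q (List.mem_cons_of_mem _ hq))
        (shift_hyp hlen hyp) p h

lemma chg_le_one : ∀ (w : List (ℕ × ℝ)) (o : ℝ), 0 ≤ o →
    (∀ p ∈ w, 0 < p.2) →
    (∀ x, 0 ≤ x → stepFun w x = stepFun twoColorInit (x + o)) →
    totalLen w + o ≤ 1 →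
    chg (w.map Prod.fst) ≤ if o < 1/2 then 1 else 0 := by
  intro w
  induction w with
  | nil => intro o _ _ _ _; split <;> simp [chg]
  | cons q t ih =>
    intro o ho hpos hyp htot
    obtain ⟨c, len⟩ := q
    have hlen : 0 < len := hpos (c, len) (by simp)
    cases t with
    | nil =>
      simp only [List.map_cons, List.map_nil]
      show chg [c] ≤ _
      simp [chg]
    | cons q2 t2 =>
      obtain ⟨c2, len2⟩ := q2
      have hpos' : ∀ p ∈ (c2, len2) :: t2, 0 < p.2 :=
        fun p hp => hpos p (List.mem_cons_of_mem _ hp)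
      have hyp' := shift_hyp hlen hyp
      have htot' : totalLen ((c2, len2) :: t2) + (o + len) ≤ 1 := by
        rw [totalLen_cons] at htot; linarith
      have hih := ih (o + len) (by linarith) hpos' hyp' htot'
      have hc : c = stepFun twoColorInit o := by
        have h0 := hyp 0 le_rfl
        rw [stepFun_cons, if_pos hlen, zero_add] at h0
        exact h0
      have hc2 : c2 = stepFun twoColorInit (o + len) := by
        have h0 := hyp' 0 le_rfl
        rw [stepFun_cons, if_pos (hpos' (c2, len2) (by simp)), zero_add] at h0
        simpa using h0
      have hlt1 : o + len < 1 := by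
        have h1 : 0 < totalLen ((c2, len2) :: t2) := totalLen_pos hpos' (by simp)
        linarith
      have hchg : chg (((c, len) :: (c2, len2) :: t2).map Prod.fst)
          = (if c ≠ c2 then 1 else 0) + chg (((c2, len2) :: t2).map Prod.fst) := rfl
      rw [hchg]
      by_cases h1 : o < 1/2
      · rw [if_pos h1]
        by_cases h2 : o + len < 1/2
        · rw [if_pos h2] at hih
          have : c = c2 := by
            rw [hc, hc2, T_eval, T_eval, if_pos h1, if_pos h2]
          rw [if_neg (by simpa using this)]
          omega
        · rw [if_neg h2] at hih
          split <;> omega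
      · rw [if_neg h1]
        have h2 : ¬ (o + len < 1/2) := by linarith
        rw [if_neg h2] at hih
        have : c = c2 := by
          rw [hc, hc2, T_eval, T_eval, if_neg h1, if_neg h2,
            if_pos hlt1, if_pos (by linarith : o < 1)]
        rw [if_neg (by simpa using this)]
        omega

lemma last_color_one : ∀ (w : List (ℕ × ℝ)) (o : ℝ), 0 ≤ o → w ≠ [] →
    (∀ p ∈ w, 0 < p.2) →
    (∀ x, 0 ≤ x → stepFun w x = stepFun twoColorInit (x + o)) →
    totalLen w + o = 1 →
    (w.map Prod.fst).getLastD 0 = 1 := by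
  intro w
  induction w with
  | nil => intro o _ h; simp at h
  | cons q t ih =>
    intro o ho _ hpos hyp htot
    obtain ⟨c, len⟩ := q
    have hlen : 0 < len := hpos (c, len) (by simp)
    cases t with
    | nil =>
      have hlen1 : len + o = 1 := by
        rw [totalLen_cons] at htot; simpa using htot
      have h0 := hyp (len/2) (by linarith)
      rw [stepFun_cons, if_pos (by linarith), T_eval] at h0
      rw [if_neg (by push_neg; linarith), if_pos (by linarith)] at h0
      simpa using h0
    | cons q2 t2 =>
      have hpos' : ∀ p ∈ q2 :: t2, 0 < p.2 :=
        fun p hp => hpos p (List.mem_cons_of_mem _ hp)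
      have hres := ih (o + len) (by linarith) (by simp) hpos' (shift_hyp hlen hyp)
        (by rw [totalLen_cons] at htot; linarith)
      simp only [List.map_cons] at hres ⊢
      rw [List.getLastD_cons]
      rw [getLastD_default_irrel _ (by simp) c 0]
      rw [List.getLastD_eq_getLast?] at hres ⊢
      simpa using hres


lemma ofFn_getD {α : Type*} {n : ℕ} (f : Fin n → α) (i : ℕ) (h : i < n) (d : α) :
    (List.ofFn f).getD i d = f ⟨i, h⟩ := by
  rw [List.getD_eq_getElem _ _ (by simpa using h), List.getElem_ofFn]

lemma ofFn_of_getD {α : Type*} : ∀ (n : ℕ) (P : List α) (_ : P.length = n) (d : α),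
    (List.ofFn fun j : Fin n => P.getD (j : ℕ) d) = P := by
  intro n
  induction n with
  | zero => intro P hP d; rw [List.length_eq_zero_iff] at hP; subst hP; simp
  | succ m ih =>
    intro P hP d
    cases P with
    | nil => simp at hP
    | cons a t =>
      rw [List.ofFn_succ]
      simp only [Fin.val_zero, List.getD_cons_zero, Fin.val_succ, List.getD_cons_succ]
      rw [ih t (by simpa using hP) d]
noncomputable def build : List ℕ → List (ℕ × ℝ) → List (List (ℕ × ℝ))
  | [], rem => [rem]
  | t :: ts, rem =>
    match rem with
    | [] => []
    | (c, x) :: r =>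
      if c = t then [(c, x/2)] :: build ts ((c, x/2) :: r)
      else
        match r with
        | [] => []
        | (c2, y) :: r2 => [(c, x), (c2, y/2)] :: build ts ((c2, y/2) :: r2)

lemma build_nil (rem : List (ℕ × ℝ)) : build [] rem = [rem] := rfl
lemma build_cons_eq (t : ℕ) (ts : List ℕ) (c : ℕ) (x : ℝ) (r : List (ℕ × ℝ)) (h : c = t) :
    build (t :: ts) ((c, x) :: r) = [(c, x/2)] :: build ts ((c, x/2) :: r) := by
  show (if c = t then _ else _) = _
  rw [if_pos h]
lemma build_cons_ne (t : ℕ) (ts : List ℕ) (c : ℕ) (x : ℝ) (c2 : ℕ) (y : ℝ)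
    (r2 : List (ℕ × ℝ)) (h : c ≠ t) :
    build (t :: ts) ((c, x) :: (c2, y) :: r2)
      = [(c, x), (c2, y/2)] :: build ts ((c2, y/2) :: r2) := by
  show (if c = t then _ else _) = _
  rw [if_neg h]

lemma build_spec : ∀ (ts : List ℕ) (rem : List (ℕ × ℝ)),
    rem ≠ [] → (∀ p ∈ rem, 0 < p.2) → (∀ p ∈ rem, p.1 = 0 ∨ p.1 = 1) →
    List.Chain' (· ≠ ·) (rem.map Prod.fst) →
    (∀ t ∈ ts, t = 0 ∨ t = 1) →
    chg ((rem.map Prod.fst).headD 0 :: ts) + 1 ≤ rem.length →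
    (build ts rem).length = ts.length + 1 ∧
    (∀ u ∈ build ts rem, u ≠ [] ∧ (∀ p ∈ u, 0 < p.2) ∧ (∀ p ∈ u, p.1 = 0 ∨ p.1 = 1)
      ∧ List.Chain' (· ≠ ·) (u.map Prod.fst)) ∧
    SameColoring (build ts rem).flatten rem ∧
    (build ts rem).map (fun u => (u.map Prod.fst).headD 0)
      = (rem.map Prod.fst).headD 0 :: ts ∧
    (build ts rem).map (fun u => (u.map Prod.fst).getLastD 0)
      = ts ++ [(rem.map Prod.fst).getLastD 0] ∧
    ((build ts rem).map List.length).sum = rem.length + ts.length := by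
  intro ts
  induction ts with
  | nil =>
    intro rem hne hpos hcol hch _ _
    rw [build_nil]
    refine ⟨rfl, ?_, ?_, rfl, rfl, by simp⟩
    · intro u hu
      rw [List.mem_singleton] at hu
      subst hu
      exact ⟨hne, hpos, hcol, hch⟩
    · show SameColoring (rem ++ []) rem
      rw [List.append_nil]
      exact SC_refl rem
  | cons t ts ih =>
    intro rem hne hpos hcol hch hts hlen
    cases rem with
    | nil => simp at hne
    | cons q r =>
      obtain ⟨c, x⟩ := q
      have hx : 0 < x := hpos (c, x) (by simp)
      have hheadD : (((c, x) :: r).map Prod.fst).headD 0 = c := rfl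
      rw [hheadD] at hlen ⊢
      by_cases hct : c = t
      · subst hct
        rw [build_cons_eq _ _ _ _ _ rfl]
        set rem' : List (ℕ × ℝ) := (c, x/2) :: r with hrem'
        have hmapeq : rem'.map Prod.fst = ((c, x) :: r).map Prod.fst := rfl
        have hpos' : ∀ p ∈ rem', 0 < p.2 := by
          intro p hp
          rcases List.mem_cons.mp hp with h | h
          · subst h; show (0:ℝ) < x/2; linarith
          · exact hpos p (List.mem_cons_of_mem _ h)
        have hcol' : ∀ p ∈ rem', p.1 = 0 ∨ p.1 = 1 := by
          intro p hp
          rcases List.mem_cons.mp hp with h | h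
          · subst h; exact hcol (c, x) (by simp)
          · exact hcol p (List.mem_cons_of_mem _ h)
        have hlen' : chg ((rem'.map Prod.fst).headD 0 :: ts) + 1 ≤ rem'.length := by
          have h1 : chg (c :: c :: ts) = chg (c :: ts) := by
            rw [chg_cons_cons]; simp
          show chg (c :: ts) + 1 ≤ r.length + 1
          rw [← h1]
          simpa using hlen
        obtain ⟨ihlen, ihpieces, ihSC, ihheads, ihlasts, ihsum⟩ :=
          ih rem' (by simp [hrem']) hpos' hcol' (hmapeq ▸ hch)
            (fun s hs => hts s (List.mem_cons_of_mem _ hs)) hlen'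
        refine ⟨by simpa using ihlen, ?_, ?_, ?_, ?_, ?_⟩
        · intro u hu
          rcases List.mem_cons.mp hu with h | h
          · subst h
            refine ⟨by simp, ?_, ?_, List.isChain_singleton _⟩
            · intro p hp; rw [List.mem_singleton] at hp; subst hp
              show (0:ℝ) < x/2; linarith
            · intro p hp; rw [List.mem_singleton] at hp; subst hp
              exact hcol (c, x) (by simp)
          · exact ihpieces u h
        · show SameColoring ([(c, x/2)] ++ (build ts rem').flatten) ((c, x) :: r)
          have h1 : [(c, x/2)] ++ (build ts rem').flatten
              = (c, x/2) :: (build ts rem').flatten := rfl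
          rw [h1]
          refine SC_trans (SC_cons c (x/2) ihSC) ?_
          have h2 : x/2 + x/2 = x := by ring
          have := SC_merge (by linarith : (0:ℝ) ≤ x/2) (by linarith : (0:ℝ) ≤ x/2) c r
          rw [h2] at this
          exact this
        · rw [List.map_cons, ihheads]
          rfl
        · rw [List.map_cons, ihlasts]
          have : ((rem'.map Prod.fst).getLastD 0) = ((((c, x) :: r)).map Prod.fst).getLastD 0 := by
            rw [hmapeq]
          rw [this]
          rfl
        · rw [List.map_cons, List.sum_cons, ihsum]
          simp only [hrem', List.length_cons, List.length_nil, List.length_singleton]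
          omega
      · -- c ≠ t branch
        have hbit : chg (c :: t :: ts) = 1 + chg (t :: ts) := by
          rw [chg_cons_cons, if_pos hct]
        cases r with
        | nil =>
          exfalso
          rw [hbit] at hlen
          simp only [List.length_cons, List.length_nil] at hlen
          omega
        | cons q2 r2 =>
          obtain ⟨c2, y⟩ := q2
          have hy : 0 < y := hpos (c2, y) (by simp)
          have hcc2 : c ≠ c2 := by
            have := (List.isChain_cons_cons.mp hch).1
            simpa using this
          have hc2t : c2 = t := by
            rcases hcol (c, x) (by simp) with h | h <;>
            rcases hcol (c2, y) (by simp [List.mem_cons]) with h2 | h2 <;>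
            rcases hts t (by simp) with h3 | h3 <;>
            simp only at h h2 h3 <;> omega
          subst hc2t
          rw [build_cons_ne _ _ _ _ _ _ _ hct]
          set rem' : List (ℕ × ℝ) := (c2, y/2) :: r2 with hrem'
          have hpos' : ∀ p ∈ rem', 0 < p.2 := by
            intro p hp
            rcases List.mem_cons.mp hp with h | h
            · subst h; show (0:ℝ) < y/2; linarith
            · exact hpos p (List.mem_cons_of_mem _ (List.mem_cons_of_mem _ h))
          have hcol' : ∀ p ∈ rem', p.1 = 0 ∨ p.1 = 1 := by
            intro p hp
            rcases List.mem_cons.mp hp with h | h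
            · subst h; exact hcol (c2, y) (by simp)
            · exact hcol p (List.mem_cons_of_mem _ (List.mem_cons_of_mem _ h))
          have hch' : List.Chain' (· ≠ ·) (rem'.map Prod.fst) := by
            have : rem'.map Prod.fst = c2 :: r2.map Prod.fst := rfl
            rw [this]
            have h2 : ((c, x) :: (c2, y) :: r2).map Prod.fst
                = c :: c2 :: r2.map Prod.fst := rfl
            rw [h2] at hch
            exact (List.isChain_cons_cons.mp hch).2
          have hlen' : chg ((rem'.map Prod.fst).headD 0 :: ts) + 1 ≤ rem'.length := by
            show chg (c2 :: ts) + 1 ≤ r2.length + 1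
            rw [hbit] at hlen
            simp only [List.length_cons] at hlen
            omega
          obtain ⟨ihlen, ihpieces, ihSC, ihheads, ihlasts, ihsum⟩ :=
            ih rem' (by simp [hrem']) hpos' hcol' hch'
              (fun s hs => hts s (List.mem_cons_of_mem _ hs)) hlen'
          refine ⟨by simpa using ihlen, ?_, ?_, ?_, ?_, ?_⟩
          · intro u hu
            rcases List.mem_cons.mp hu with h | h
            · subst h
              refine ⟨by simp, ?_, ?_, ?_⟩
              · intro p hp
                rcases List.mem_cons.mp hp with h | h
                · subst h; exact hx
                · rw [List.mem_singleton] at h; subst h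
                  show (0:ℝ) < y/2; linarith
              · intro p hp
                rcases List.mem_cons.mp hp with h | h
                · subst h; exact hcol (c, x) (by simp)
                · rw [List.mem_singleton] at h; subst h
                  exact hcol (c2, y) (by simp)
              · have : ([(c, x), (c2, y/2)]).map Prod.fst = [c, c2] := rfl
                rw [this]
                exact List.isChain_pair.mpr hcc2
            · exact ihpieces u h
          · show SameColoring ([(c, x), (c2, y/2)] ++ (build ts rem').flatten)
              ((c, x) :: (c2, y) :: r2)
            have h1 : [(c, x), (c2, y/2)] ++ (build ts rem').flatten
                = (c, x) :: (c2, y/2) :: (build ts rem').flatten := rfl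
            rw [h1]
            refine SC_trans (SC_cons c x (SC_cons c2 (y/2) ihSC)) ?_
            apply SC_cons
            have h2 : y/2 + y/2 = y := by ring
            have := SC_merge (by linarith : (0:ℝ) ≤ y/2) (by linarith : (0:ℝ) ≤ y/2) c2 r2
            rw [h2] at this
            exact this
          · rw [List.map_cons, ihheads]
            rfl
          · rw [List.map_cons, ihlasts]
            have hl2 : ((((c, x) :: (c2, y) :: r2)).map Prod.fst).getLastD 0
                = ((rem'.map Prod.fst)).getLastD 0 := by
              show (c :: c2 :: r2.map Prod.fst).getLastD 0 = (c2 :: r2.map Prod.fst).getLastD 0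
              rw [List.getLastD_cons, getLastD_default_irrel _ (by simp) c 0]
            rw [hl2]
            rfl
          · rw [List.map_cons, List.sum_cons, ihsum]
            simp only [hrem', List.length_cons, List.length_nil, List.length_singleton]
            omega

-- ===== additional helpers =====

lemma headD_mem {l : List ℕ} (h : l ≠ []) (d : ℕ) : l.headD d ∈ l := by
  cases l with
  | nil => simp at h
  | cons a t => simp

lemma getLastD_mem {l : List ℕ} (h : l ≠ []) (d : ℕ) : l.getLastD d ∈ l := by
  induction l generalizing d with
  | nil => simp at h
  | cons a t ih =>
    cases t with
    | nil => simp
    | cons b t2 =>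
      rw [List.getLastD_cons]
      exact List.mem_cons_of_mem _ (ih (by simp) a)

def flp (f x : ℕ) : ℕ := if f = 0 then x else 1 - x

lemma flp01 (f : ℕ) {x : ℕ} (hx : x = 0 ∨ x = 1) : flp f x = 0 ∨ flp f x = 1 := by
  unfold flp; rcases hx with h | h <;> subst h <;> split <;> simp

lemma flp_ne (f : ℕ) {x y : ℕ} (hx : x = 0 ∨ x = 1) (hy : y = 0 ∨ y = 1) :
    (flp f x ≠ flp f y ↔ x ≠ y) := by
  unfold flp
  rcases hx with h | h <;> rcases hy with h2 | h2 <;> subst h <;> subst h2 <;>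
    split <;> simp

lemma chg_map_flp (f : ℕ) (g : ℕ → ℕ) (hg : ∀ j, g j = 0 ∨ g j = 1) :
    ∀ l : List ℕ, chg (l.map fun j => flp f (g j)) = chg (l.map g) := by
  intro l
  induction l with
  | nil => rfl
  | cons a t ih =>
    cases t with
    | nil => rfl
    | cons b t2 =>
      simp only [List.map_cons] at ih ⊢
      rw [chg_cons_cons, chg_cons_cons, ih]
      congr 1
      by_cases hab : g a = g b
      · rw [hab]; simp
      · rw [if_pos hab, if_pos ((flp_ne f (hg a) (hg b)).mpr hab)]

lemma chain'_ofFn {α : Type*} {n : ℕ} (R : α → α → Prop) (f : Fin n → α)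
    (h : ∀ (i : ℕ) (hi : i + 1 < n), R (f ⟨i, by omega⟩) (f ⟨i + 1, hi⟩)) :
    List.Chain' R (List.ofFn f) := by
  unfold List.Chain'
  rw [List.isChain_iff_getElem]
  intro i hi
  rw [List.length_ofFn] at hi
  have hi' : i + 1 < n := by omega
  simp only [List.getElem_ofFn]
  exact h i hi'

lemma of_chain'_ofFn {α : Type*} {n : ℕ} (R : α → α → Prop) (f : Fin n → α)
    (h : List.Chain' R (List.ofFn f)) :
    ∀ (i : ℕ) (hi : i + 1 < n), R (f ⟨i, by omega⟩) (f ⟨i + 1, hi⟩) := by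
  unfold List.Chain' at h
  rw [List.isChain_iff_getElem] at h
  intro i hi
  have := h i (by simp; omega)
  simp only [List.getElem_ofFn] at this
  exact this

lemma range_map_eq_ofFn {α : Type*} {n : ℕ} (cfun : ℕ → α) (f : Fin n → α)
    (h : ∀ (j : ℕ) (hj : j < n), cfun j = f ⟨j, hj⟩) :
    (List.range n).map cfun = List.ofFn f := by
  apply List.ext_getElem
  · simp
  · intro i h1 h2
    simp only [List.getElem_map, List.getElem_range] at h1 ⊢
    rw [List.getElem_ofFn]
    exact h i (by simpa using h2)

lemma numIntf_T : numIntf twoColorInit = 2 := by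
  have : twoColorInit.map Prod.fst = [0, 1] := by simp [twoColorInit]
  rw [numIntf, this]
  decide

def InvP (a : List (ℕ × ℝ)) : Prop :=
  a ≠ [] ∧ (∀ p ∈ a, 0 < p.2) ∧ (∀ p ∈ a, p.1 = 0 ∨ p.1 = 1) ∧
  List.Chain' (· ≠ ·) (a.map Prod.fst) ∧
  (a.map Prod.fst).getLastD 0 ≠ (a.map Prod.fst).headD 0 ∧ 2 ≤ a.length

lemma map_ne_nil {a : List (ℕ × ℝ)} (h : a ≠ []) : a.map Prod.fst ≠ [] := by
  simpa using h

lemma numIntf_of_inv {a : List (ℕ × ℝ)} (h : InvP a) : numIntf a = a.length := by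
  obtain ⟨hne, _, _, hchain, hwrap, _⟩ := h
  rw [numIntf, cyclic_eq _ (map_ne_nil hne), if_pos hwrap]
  have h2 := chg_of_chain' (map_ne_nil hne) hchain
  rw [List.length_map] at h2
  omega

lemma invP_T : InvP twoColorInit := by
  have hm : twoColorInit.map Prod.fst = [0, 1] := by simp [twoColorInit]
  refine ⟨by simp [twoColorInit], ?_, ?_, ?_, ?_, by simp [twoColorInit]⟩
  · intro p hp
    simp only [twoColorInit, List.mem_cons, List.mem_singleton] at hp
    rcases hp with h | h | h
    · subst h; norm_num
    · subst h; norm_num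
    · simp at h
  · intro p hp
    simp only [twoColorInit, List.mem_cons, List.mem_singleton] at hp
    rcases hp with h | h | h
    · subst h; simp
    · subst h; simp
    · simp at h
  · rw [hm]
    exact List.isChain_pair.mpr (by decide)
  · rw [hm]
    decide

-- ===== the inductive step =====

lemma step_ex (m : ℕ) (π : Equiv.Perm (Fin (m + 1))) (c : ℕ → ℕ)
    (hc01 : ∀ j, c j = 0 ∨ c j = 1) (hc0 : c 0 = 0) (hcL : c (m + 1) = 1)
    (hPc : ∀ k : Fin (m + 1), c ((π k : ℕ) + 1) ≠ c ((π (k + 1) : ℕ)))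
    (hch : chg ((List.range (m + 1)).map c) ≤ 1) :
    ∀ a, InvP a → ∃ b, IETStep (m + 1) π a b ∧ numIntf b = numIntf a + m
      ∧ InvP b := by
  intro a ha
  obtain ⟨hne, hpos, hcol, hchain, hwrap, hlen2⟩ := ha
  set f := (a.map Prod.fst).headD 0 with hf
  have hf01 : f = 0 ∨ f = 1 := by
    obtain ⟨p, hp, hpf⟩ := List.mem_map.mp (headD_mem (map_ne_nil hne) 0)
    rw [hf, ← hpf]; exact hcol p hp
  have hg01 : (a.map Prod.fst).getLastD 0 = 0 ∨ (a.map Prod.fst).getLastD 0 = 1 := by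
    obtain ⟨p, hp, hpf⟩ := List.mem_map.mp (getLastD_mem (map_ne_nil hne) 0)
    rw [← hpf]; exact hcol p hp
  set D : ℕ → ℕ := fun j => flp f (c j) with hD
  have hD01 : ∀ j, D j = 0 ∨ D j = 1 := fun j => flp01 f (hc01 j)
  have hD0 : D 0 = f := by
    show flp f (c 0) = f
    rw [hc0]
    unfold flp
    rcases hf01 with h | h <;> rw [h] <;> simp
  have hglast : (a.map Prod.fst).getLastD 0 = D (m + 1) := by
    have hDL : D (m + 1) = 1 - f := by
      show flp f (c (m + 1)) = 1 - f
      rw [hcL]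
      unfold flp
      rcases hf01 with h | h <;> rw [h] <;> simp
    rw [hDL]
    rcases hf01 with h | h <;> rcases hg01 with h2 | h2 <;>
      rw [h2] <;> rw [h] at hwrap ⊢ <;> omega
  set ts : List ℕ := (List.range m).map (fun i => D (i + 1)) with hts
  have htscol : ∀ t ∈ ts, t = 0 ∨ t = 1 := by
    intro t ht
    rw [hts] at ht
    obtain ⟨i, _, hit⟩ := List.mem_map.mp ht
    rw [← hit]; exact hD01 _
  have hfts : f :: ts = (List.range (m + 1)).map D := by
    rw [hts, List.range_succ_eq_map, List.map_cons, List.map_map, hD0]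
    rfl
  have hprecond : chg (f :: ts) + 1 ≤ a.length := by
    have h1 : chg (f :: ts) ≤ 1 := by
      rw [hfts, hD, chg_map_flp f c hc01]
      exact hch
    omega
  obtain ⟨hlenP, hpieces, hSC, hheads, hlasts, hsum⟩ :=
    build_spec ts a hne hpos hcol hchain htscol hprecond
  rw [← hf] at hheads
  set P := build ts a with hP
  have htslen : ts.length = m := by rw [hts]; simp
  have hPlen : P.length = m + 1 := by rw [hlenP, htslen]
  set pieces : Fin (m + 1) → List (ℕ × ℝ) := fun j => P.getD (j : ℕ) [] with hpiecesdef
  have hofn : List.ofFn pieces = P := by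
    rw [hpiecesdef]
    exact ofFn_of_getD (m + 1) P hPlen []
  have hmem : ∀ j : Fin (m + 1), pieces j ∈ P := by
    intro j
    rw [hpiecesdef]
    simp only
    rw [List.getD_eq_getElem _ _ (by omega : (j : ℕ) < P.length)]
    exact List.getElem_mem _
  have hpspec : ∀ j : Fin (m + 1), pieces j ≠ [] ∧ (∀ p ∈ pieces j, 0 < p.2) ∧
      (∀ p ∈ pieces j, p.1 = 0 ∨ p.1 = 1) ∧
      List.Chain' (· ≠ ·) ((pieces j).map Prod.fst) :=
    fun j => hpieces _ (hmem j)
  have hmapget : ∀ (F : List (ℕ × ℝ) → ℕ) (j : Fin (m + 1)),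
      F (pieces j) = (P.map F).getD (j : ℕ) 0 := by
    intro F j
    have hj : (j : ℕ) < P.length := by omega
    rw [List.getD_eq_getElem _ _ (by simpa using hj), List.getElem_map]
    congr 1
    rw [hpiecesdef]
    simp only
    rw [List.getD_eq_getElem _ _ hj]
  have hheadj : ∀ j : Fin (m + 1), ((pieces j).map Prod.fst).headD 0 = D (j : ℕ) := by
    intro j
    rw [hmapget (fun u => (u.map Prod.fst).headD 0) j, hheads, hfts]
    have hj : (j : ℕ) < m + 1 := j.2
    rw [List.getD_eq_getElem _ _ (by simpa using hj), List.getElem_map,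
      List.getElem_range]
  have hlastj : ∀ j : Fin (m + 1),
      ((pieces j).map Prod.fst).getLastD 0 = D ((j : ℕ) + 1) := by
    intro j
    rw [hmapget (fun u => (u.map Prod.fst).getLastD 0) j, hlasts]
    have hlast2 : ts ++ [(a.map Prod.fst).getLastD 0]
        = (List.range (m + 1)).map (fun i => D (i + 1)) := by
      rw [hglast, hts, List.range_succ, List.map_append]
      rfl
    rw [hlast2]
    have hj : (j : ℕ) < m + 1 := j.2
    rw [List.getD_eq_getElem _ _ (by simpa using hj), List.getElem_map,
      List.getElem_range]
  set b : List (ℕ × ℝ) := (List.ofFn fun j => pieces (π j)).flatten with hb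
  have hIET : IETStep (m + 1) π a b := by
    refine ⟨pieces, fun j => (hpspec j).1, fun j => (hpspec j).2.1, ?_, rfl⟩
    show SameColoring ((List.ofFn pieces).flatten) a
    rw [hofn]
    exact hSC
  set ll : List (List ℕ) := List.ofFn fun k => ((pieces (π k)).map Prod.fst) with hll
  have hcb : b.map Prod.fst = ll.flatten := by
    rw [hb, List.map_flatten, List.map_ofFn, hll]
    rfl
  have hllne : ∀ u ∈ ll, u ≠ [] := by
    intro u hu
    rw [hll, List.mem_ofFn] at hu
    obtain ⟨k, hk⟩ := hu
    rw [← hk]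
    simpa using (hpspec (π k)).1
  have hllchain : ∀ u ∈ ll, List.Chain' (· ≠ ·) u := by
    intro u hu
    rw [hll, List.mem_ofFn] at hu
    obtain ⟨k, hk⟩ := hu
    rw [← hk]
    exact (hpspec (π k)).2.2.2
  have hjunc : ∀ (i : ℕ) (hi : i + 1 < m + 1),
      D ((π ⟨i, by omega⟩ : ℕ) + 1) ≠ D ((π ⟨i + 1, hi⟩ : ℕ)) := by
    intro i hi
    have hk := hPc ⟨i, by omega⟩
    have hlt : (⟨i, by omega⟩ : Fin (m + 1)) < Fin.last m := by
      rw [Fin.lt_def]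
      show i < m
      omega
    have hadd : (⟨i, by omega⟩ + 1 : Fin (m + 1)) = ⟨i + 1, hi⟩ := by
      apply Fin.ext
      rw [Fin.val_add_one_of_lt hlt]
    rw [hadd] at hk
    rw [hD]
    exact (flp_ne f (hc01 _) (hc01 _)).mpr hk
  have hllj : List.Chain' (fun u v => u.getLastD 0 ≠ v.headD 0) ll := by
    rw [hll]
    apply chain'_ofFn
    intro i hi
    rw [hlastj (π ⟨i, by omega⟩), hheadj (π ⟨i + 1, hi⟩)]
    exact hjunc i hi
  have hbchain : List.Chain' (· ≠ ·) (b.map Prod.fst) := by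
    rw [hcb]
    exact chain'_flatten hllne hllchain hllj
  have hlast_b : (b.map Prod.fst).getLastD 0 = D ((π (Fin.last m) : ℕ) + 1) := by
    rw [hcb, getLastD_flatten hllne]
    have h1 : ll.map (fun u => u.getLastD 0)
        = List.ofFn (fun k : Fin (m + 1) => ((pieces (π k)).map Prod.fst).getLastD 0) := by
      rw [hll, List.map_ofFn]
      rfl
    rw [h1]
    have h2 : (List.ofFn (fun k : Fin (m + 1) =>
        ((pieces (π k)).map Prod.fst).getLastD 0)).length = m + 1 := by simp
    rw [getLastD_eq_getD _ _ (by rw [← List.length_pos_iff, h2]; omega), h2]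
    have h3 : m + 1 - 1 = m := by omega
    rw [h3, ofFn_getD _ _ (by omega : m < m + 1)]
    rw [hlastj]
    rfl
  have hhead_b : (b.map Prod.fst).headD 0 = D ((π 0 : ℕ)) := by
    rw [hcb, headD_flatten hllne]
    have h1 : ll.map (fun u => u.headD 0)
        = List.ofFn (fun k : Fin (m + 1) => ((pieces (π k)).map Prod.fst).headD 0) := by
      rw [hll, List.map_ofFn]
      rfl
    rw [h1, headD_eq_getD, ofFn_getD _ _ (by omega : 0 < m + 1)]
    rw [hheadj]
    rfl
  have hwrap_b : (b.map Prod.fst).getLastD 0 ≠ (b.map Prod.fst).headD 0 := by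
    rw [hlast_b, hhead_b]
    have hk := hPc (Fin.last m)
    rw [Fin.last_add_one] at hk
    rw [hD]
    exact (flp_ne f (hc01 _) (hc01 _)).mpr hk
  have hlen_b : b.length = a.length + m := by
    rw [hb, List.length_flatten, List.map_ofFn, List.sum_ofFn]
    have h1 : ∑ k : Fin (m + 1), (List.length ∘ fun j => pieces (π j)) k
        = ∑ j : Fin (m + 1), (pieces j).length :=
      Equiv.sum_comp π (fun j => (pieces j).length)
    rw [h1]
    have h2 : ∑ j : Fin (m + 1), (pieces j).length = (P.map List.length).sum := by
      conv_rhs => rw [← hofn]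
      rw [List.map_ofFn, List.sum_ofFn]
      rfl
    rw [h2, hsum, htslen]
  have hbne : b ≠ [] := by
    rw [← List.length_pos_iff, hlen_b]
    omega
  have hnumb : numIntf b = b.length := by
    rw [numIntf, cyclic_eq _ (map_ne_nil hbne), if_pos hwrap_b]
    have h2 := chg_of_chain' (map_ne_nil hbne) hbchain
    rw [List.length_map] at h2
    omega
  refine ⟨b, hIET, ?_, ?_⟩
  · rw [hnumb, hlen_b, numIntf_of_inv ⟨hne, hpos, hcol, hchain, hwrap, hlen2⟩]
  · refine ⟨hbne, ?_, ?_, hbchain, hwrap_b, by omega⟩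
    · intro p hp
      rw [hb, List.mem_flatten] at hp
      obtain ⟨u, hu, hpu⟩ := hp
      rw [List.mem_ofFn] at hu
      obtain ⟨k, hk⟩ := hu
      have hk' : pieces (π k) = u := hk
      exact (hpspec (π k)).2.1 p (hk' ▸ hpu)
    · intro p hp
      rw [hb, List.mem_flatten] at hp
      obtain ⟨u, hu, hpu⟩ := hp
      rw [List.mem_ofFn] at hu
      obtain ⟨k, hk⟩ := hu
      have hk' : pieces (π k) = u := hk
      exact (hpspec (π k)).2.2.1 p (hk' ▸ hpu)


-- ===== extraction of the cut pattern from the hypothesis =====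

lemma extract (m : ℕ) (π : Equiv.Perm (Fin (m + 1)))
    (cc : List (ℕ × ℝ)) (hstep : IETStep (m + 1) π twoColorInit cc)
    (hcnt : numIntf cc = numIntf twoColorInit + m) :
    ∃ c : ℕ → ℕ, (∀ j, c j = 0 ∨ c j = 1) ∧ c 0 = 0 ∧ c (m + 1) = 1 ∧
      (∀ k : Fin (m + 1), c ((π k : ℕ) + 1) ≠ c ((π (k + 1) : ℕ))) ∧
      chg ((List.range (m + 1)).map c) ≤ 1 := by
  obtain ⟨p, hpne, hppos, hSC, hccdef⟩ := hstep
  set w : List (ℕ × ℝ) := (List.ofFn fun j => p j).flatten with hw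
  have hyp : ∀ x : ℝ, 0 ≤ x → stepFun w x = stepFun twoColorInit (x + 0) := by
    intro x _
    rw [add_zero]
    exact hSC.2 x
  have htot : totalLen w = 1 := by rw [hSC.1, totalLen_T]
  have hpmem : ∀ (j : Fin (m + 1)) (q : ℕ × ℝ), q ∈ p j → q ∈ w := by
    intro j q hq
    rw [hw, List.mem_flatten]
    exact ⟨p j, List.mem_ofFn.mpr ⟨j, rfl⟩, hq⟩
  have wpos : ∀ q ∈ w, 0 < q.2 := by
    intro q hq
    rw [hw, List.mem_flatten] at hq
    obtain ⟨u, hu, hqu⟩ := hq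
    rw [List.mem_ofFn] at hu
    obtain ⟨j, hj⟩ := hu
    have hj' : p j = u := hj
    exact hppos j q (hj' ▸ hqu)
  have wne : w ≠ [] := by
    intro h
    rw [h] at htot
    norm_num [totalLen] at htot
  have wcols : ∀ q ∈ w, q.1 = 0 ∨ q.1 = 1 := colors_mem w 0 wpos hyp
  have hchgw : chg (w.map Prod.fst) ≤ 1 := by
    have := chg_le_one w 0 le_rfl wpos hyp (by rw [htot]; norm_num)
    simpa using this
  set ll : List (List ℕ) := List.ofFn fun j => ((p j).map Prod.fst) with hll
  have hwmap : w.map Prod.fst = ll.flatten := by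
    rw [hw, List.map_flatten, List.map_ofFn, hll]
    rfl
  have hllne : ∀ u ∈ ll, u ≠ [] := by
    intro u hu
    rw [hll, List.mem_ofFn] at hu
    obtain ⟨j, hj⟩ := hu
    have hj' : (p j).map Prod.fst = u := hj
    rw [← hj']
    simpa using hpne j
  set llp : List (List ℕ) := List.ofFn fun k => ((p (π k)).map Prod.fst) with hllp
  have hlpne : ∀ u ∈ llp, u ≠ [] := by
    intro u hu
    rw [hllp, List.mem_ofFn] at hu
    obtain ⟨j, hj⟩ := hu
    have hj' : (p (π j)).map Prod.fst = u := hj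
    rw [← hj']
    simpa using hpne (π j)
  have hccmap : cc.map Prod.fst = llp.flatten := by
    rw [hccdef, List.map_flatten, List.map_ofFn, hllp]
    rfl
  have hlplen : llp.length = m + 1 := by rw [hllp]; simp
  have hlllen : ll.length = m + 1 := by rw [hll]; simp
  have hccne : cc ≠ [] := by
    intro h
    have h2 : llp.flatten ≠ [] :=
      flatten_ne_nil (by rw [← List.length_pos_iff, hlplen]; omega) hlpne
    rw [h] at hccmap
    exact h2 hccmap.symm
  have hflat : chg ll.flatten = (ll.map chg).sum + jsum ll := chg_flatten hllne
  have hflatp : chg llp.flatten = (llp.map chg).sum + jsum llp := chg_flatten hlpne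
  have hAeq : (llp.map chg).sum = (ll.map chg).sum := by
    rw [hll, hllp, List.map_ofFn, List.map_ofFn, List.sum_ofFn, List.sum_ofFn]
    exact Equiv.sum_comp π (chg ∘ fun j => (p j).map Prod.fst)
  have hAj : (ll.map chg).sum + jsum ll ≤ 1 := by
    rw [← hflat, ← hwmap]
    exact hchgw
  set W : ℕ := if (llp.flatten).getLastD 0 ≠ (llp.flatten).headD 0 then 1 else 0 with hWdef
  have hWle : W ≤ 1 := by rw [hWdef]; split <;> omega
  have hjple : jsum llp + 1 ≤ m + 1 := by
    have := jsum_le (ll := llp) (by rw [← List.length_pos_iff, hlplen]; omega)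
    omega
  have hnum : (llp.map chg).sum + jsum llp + W = m + 2 := by
    have h1 : numIntf cc = chg llp.flatten + W := by
      rw [numIntf, hccmap, cyclic_eq _ (flatten_ne_nil (by rw [← List.length_pos_iff, hlplen]; omega) hlpne)]
    rw [h1, hflatp, numIntf_T] at hcnt
    omega
  have hA1 : (ll.map chg).sum = 1 ∧ jsum llp = m ∧ W = 1 ∧ jsum ll = 0 := by
    rw [hAeq] at hnum
    omega
  obtain ⟨hA, hjp, hW1, hj0⟩ := hA1
  have hchain0 : List.Chain' (fun u v => u.getLastD 0 = v.headD 0) ll := jsum_zero hj0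
  have hchainp : List.Chain' (fun u v => u.getLastD 0 ≠ v.headD 0) llp :=
    jsum_max (by rw [hjp, hlplen])
  have hwrapne : (llp.flatten).getLastD 0 ≠ (llp.flatten).headD 0 := by
    by_contra hcon
    rw [hWdef, if_neg (not_not_intro hcon)] at hW1
    omega
  -- define the pattern
  set lc : Fin (m + 1) → ℕ := fun j => ((p j).map Prod.fst).headD 0 with hlc
  set rc : Fin (m + 1) → ℕ := fun j => ((p j).map Prod.fst).getLastD 0 with hrc
  have hpmapne : ∀ j : Fin (m + 1), (p j).map Prod.fst ≠ [] := by
    intro j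
    simpa using hpne j
  have hlc01 : ∀ j, lc j = 0 ∨ lc j = 1 := by
    intro j
    obtain ⟨q, hq, hql⟩ := List.mem_map.mp (headD_mem (hpmapne j) 0)
    rw [hlc]
    simp only
    rw [← hql]
    exact wcols q (hpmem j q hq)
  have hrc01 : ∀ j, rc j = 0 ∨ rc j = 1 := by
    intro j
    obtain ⟨q, hq, hql⟩ := List.mem_map.mp (getLastD_mem (hpmapne j) 0)
    rw [hrc]
    simp only
    rw [← hql]
    exact wcols q (hpmem j q hq)
  refine ⟨fun j => if h : j < m + 1 then lc ⟨j, h⟩ else 1, ?_, ?_, ?_, ?_, ?_⟩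
  · intro j
    beta_reduce
    by_cases h : j < m + 1
    · rw [dif_pos h]; exact hlc01 _
    · rw [dif_neg h]; right; rfl
  · -- c 0 = 0
    beta_reduce
    rw [dif_pos (by omega : 0 < m + 1)]
    have h1 : (w.map Prod.fst).headD 0 = stepFun twoColorInit 0 := by
      have := head_color_eq wne wpos hyp
      simpa using this
    have h2 : stepFun twoColorInit 0 = 0 := by
      rw [T_eval]
      norm_num
    have h3 : (w.map Prod.fst).headD 0 = lc ⟨0, by omega⟩ := by
      rw [hwmap, headD_flatten hllne]
      have h4 : ll.map (fun u => u.headD 0)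
          = List.ofFn (fun j : Fin (m + 1) => lc j) := by
        rw [hll, List.map_ofFn]
        rfl
      rw [h4, headD_eq_getD, ofFn_getD _ _ (by omega : 0 < m + 1)]
    rw [← h3, h1, h2]
  · -- c (m+1) = 1
    beta_reduce
    rw [dif_neg (by omega)]
  · -- the permuted junction condition
    have hrel : ∀ j : Fin (m + 1), rc j
        = if h : (j : ℕ) + 1 < m + 1 then lc ⟨(j : ℕ) + 1, h⟩ else 1 := by
      intro j
      by_cases hj : (j : ℕ) + 1 < m + 1
      · rw [dif_pos hj]
        have := of_chain'_ofFn _ _ ((hll ▸ hchain0 : List.Chain' _ (List.ofFn fun j => ((p j).map Prod.fst)))) (j : ℕ) hj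
        have hje : (⟨(j : ℕ), by omega⟩ : Fin (m + 1)) = j := by
          apply Fin.ext; rfl
        rw [hje] at this
        exact this
      · rw [dif_neg hj]
        have hjm : (j : ℕ) = m := by have := j.2; omega
        have hjlast : j = ⟨m, by omega⟩ := by apply Fin.ext; rw [hjm]
        -- rc of the last piece is the last color of w
        have h5 : (w.map Prod.fst).getLastD 0 = rc ⟨m, by omega⟩ := by
          rw [hwmap, getLastD_flatten hllne]
          have h4 : ll.map (fun u => u.getLastD 0)
              = List.ofFn (fun j : Fin (m + 1) => rc j) := by
            rw [hll, List.map_ofFn]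
            rfl
          rw [h4]
          have h6 : (List.ofFn (fun j : Fin (m + 1) => rc j)).length = m + 1 := by simp
          rw [getLastD_eq_getD _ _ (by rw [← List.length_pos_iff, h6]; omega), h6]
          have h7 : m + 1 - 1 = m := by omega
          rw [h7, ofFn_getD _ _ (by omega : m < m + 1)]
        have h8 : (w.map Prod.fst).getLastD 0 = 1 :=
          last_color_one w 0 le_rfl wne wpos hyp (by rw [htot]; ring)
        rw [hjlast, ← h5, h8]
    intro k
    beta_reduce
    have hlcc : ∀ j : Fin (m + 1),
        (if h : (j : ℕ) < m + 1 then lc ⟨(j : ℕ), h⟩ else 1) = lc j := by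
      intro j
      rw [dif_pos j.2]
    rw [← hrel (π k), hlcc]
    -- now goal : rc (π k) ≠ lc (π (k + 1))
    by_cases hk : (k : ℕ) + 1 < m + 1
    · have := of_chain'_ofFn _ _
        ((hllp ▸ hchainp : List.Chain' _ (List.ofFn fun k => ((p (π k)).map Prod.fst)))) (k : ℕ) hk
      have hke : (⟨(k : ℕ), by omega⟩ : Fin (m + 1)) = k := by apply Fin.ext; rfl
      rw [hke] at this
      have hk1 : (k + 1 : Fin (m + 1)) = ⟨(k : ℕ) + 1, hk⟩ := by
        apply Fin.ext
        rw [Fin.val_add_one_of_lt (by rw [Fin.lt_def]; show (k : ℕ) < m; omega)]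
      rw [hk1]
      exact this
    · have hkm : (k : ℕ) = m := by have := k.2; omega
      have hklast : k = Fin.last m := by apply Fin.ext; rw [hkm]; rfl
      rw [hklast, Fin.last_add_one]
      -- use the wrap-around inequality
      have h5 : (llp.flatten).getLastD 0 = rc (π (Fin.last m)) := by
        rw [getLastD_flatten hlpne]
        have h4 : llp.map (fun u => u.getLastD 0)
            = List.ofFn (fun k : Fin (m + 1) => rc (π k)) := by
          rw [hllp, List.map_ofFn]
          rfl
        rw [h4]
        have h6 : (List.ofFn (fun k : Fin (m + 1) => rc (π k))).length = m + 1 := by simp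
        rw [getLastD_eq_getD _ _ (by rw [← List.length_pos_iff, h6]; omega), h6]
        have h7 : m + 1 - 1 = m := by omega
        rw [h7, ofFn_getD _ _ (by omega : m < m + 1)]
        rfl
      have h9 : (llp.flatten).headD 0 = lc (π 0) := by
        rw [headD_flatten hlpne]
        have h4 : llp.map (fun u => u.headD 0)
            = List.ofFn (fun k : Fin (m + 1) => lc (π k)) := by
          rw [hllp, List.map_ofFn]
          rfl
        rw [h4, headD_eq_getD, ofFn_getD _ _ (by omega : 0 < m + 1)]
        rfl
      rw [← h5, ← h9]
      exact hwrapne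
  · -- chg bound
    have h1 : chg (ll.map (fun u => u.headD 0)) ≤ 1 := by
      apply chg_heads_le hllne
      rw [← hwmap]
      exact hchgw
    have h2 : ll.map (fun u => u.headD 0) = List.ofFn (fun j : Fin (m + 1) => lc j) := by
      rw [hll, List.map_ofFn]
      rfl
    have h3 : (List.range (m + 1)).map (fun j => if h : j < m + 1 then lc ⟨j, h⟩ else 1)
        = List.ofFn (fun j : Fin (m + 1) => lc j) := by
      apply range_map_eq_ofFn
      intro j hj
      rw [dif_pos hj]
    rw [h3, ← h2]
    exact h1


end S5

/-- If there exist cut locations such that one application of the IET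
with permutation `π` to the two-color initial condition creates `L - 1` new interfaces,
then for every `N ≥ 1` there exist cut locations at each iteration such that the
corresponding variable IET creates `L - 1` new interfaces at every one of the `N`
iterations. -/
theorem stmt5 (L : ℕ) (hL : 2 ≤ L) (π : Equiv.Perm (Fin L))
    (h1 : ∃ c, IETStep L π twoColorInit c ∧
      numIntf c = numIntf twoColorInit + (L - 1)) :
    ∀ N : ℕ, 1 ≤ N → ∃ s : ℕ → List (ℕ × ℝ), s 0 = twoColorInit ∧
      ∀ n < N, IETStep L π (s n) (s (n + 1)) ∧
        numIntf (s (n + 1)) = numIntf (s n) + (L - 1) := by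
  obtain ⟨m, rfl⟩ : ∃ m, L = m + 1 := ⟨L - 1, by omega⟩
  obtain ⟨cc, hstep, hcnt⟩ := h1
  have hcnt' : numIntf cc = numIntf twoColorInit + m := by simpa using hcnt
  obtain ⟨c, hc01, hc0, hcL, hPc, hch⟩ := S5.extract m π cc hstep hcnt'
  have hstepex := S5.step_ex m π c hc01 hc0 hcL hPc hch
  let F : {a : List (ℕ × ℝ) // S5.InvP a} → {a : List (ℕ × ℝ) // S5.InvP a} :=
    fun x => ⟨(hstepex x.1 x.2).choose, ((hstepex x.1 x.2).choose_spec).2.2⟩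
  intro N _
  refine ⟨fun n => (F^[n] ⟨twoColorInit, S5.invP_T⟩).1, rfl, ?_⟩
  intro n _
  have hiter : F^[n + 1] ⟨twoColorInit, S5.invP_T⟩
      = F (F^[n] ⟨twoColorInit, S5.invP_T⟩) :=
    Function.iterate_succ_apply' F n _
  beta_reduce
  rw [hiter]
  set x := F^[n] (⟨twoColorInit, S5.invP_T⟩ : {a : List (ℕ × ℝ) // S5.InvP a}) with hx
  have hspec := (hstepex x.1 x.2).choose_spec
  refine ⟨hspec.1, ?_⟩
  have h2 := hspec.2.1
  simpa using h2
end

section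
/- For the two-color initial condition with L = 3 and permutation 132, at the N-th iteration there are exactly binomial(N+1, 2) distinct pairs (i,j) with 1 ≤ i ≤ j ≤ N of optimal cut choices, and over N iterations the total number of distinct sequences of optimal cut choices equals ∏_{n=1}^{N} binomial(n+1, 2) = (N!)² (N+1) / 2^N. -/
open scoped BigOperators

lemma aux10 (N : ℕ) : ∑ i ∈ Finset.Icc 1 N, (N + 1 - i) = (N + 1).choose 2 := by
  induction N with
  | zero => simp
  | succ n ih =>
    rw [Finset.sum_Icc_succ_top (by omega)]
    have h1 : ∑ i ∈ Finset.Icc 1 n, (n + 1 + 1 - i) =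
        ∑ i ∈ Finset.Icc 1 n, ((n + 1 - i) + 1) := by
      apply Finset.sum_congr rfl
      intro i hi; simp only [Finset.mem_Icc] at hi; omega
    rw [h1, Finset.sum_add_distrib, ih, Nat.choose_succ_succ (n + 1) 1,
      Nat.choose_one_right]
    simp [Nat.card_Icc]
    omega

/-- For the two-color initial condition with `L = 3` and permutation
`132`: at the `N`-th iteration there are exactly `(N+1).choose 2` distinct pairs `(i,j)`
with `1 ≤ i ≤ j ≤ N` of optimal cut choices, and over `N` iterations the total number of
distinct sequences of optimal cut choices equals
`∏_{n=1}^{N} (n+1).choose 2 = (N!)² (N+1) / 2^N`. -/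
theorem stmt10 (N : ℕ) :
    ((Finset.Icc 1 N ×ˢ Finset.Icc 1 N).filter fun p => p.1 ≤ p.2).card =
      (N + 1).choose 2 ∧
    (∏ n ∈ Finset.Icc 1 N, ((n + 1).choose 2 : ℚ)) =
      (N.factorial : ℚ) ^ 2 * (N + 1) / 2 ^ N := by
  constructor
  · rw [Finset.card_filter, Finset.sum_product]
    have h : ∀ i ∈ Finset.Icc 1 N, (∑ j ∈ Finset.Icc 1 N, if i ≤ j then 1 else 0)
        = N + 1 - i := by
      intro i hi
      simp only [Finset.mem_Icc] at hi
      rw [← Finset.card_filter]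
      have : Finset.filter (fun j => i ≤ j) (Finset.Icc 1 N) = Finset.Icc i N := by
        ext j; simp only [Finset.mem_filter, Finset.mem_Icc]; omega
      rw [this, Nat.card_Icc]
    rw [Finset.sum_congr rfl h, aux10]
  · induction N with
    | zero => simp
    | succ n ih =>
      rw [Finset.prod_Icc_succ_top (by omega), ih]
      rw [Nat.cast_choose_two, Nat.factorial_succ]
      push_cast
      field_simp
      ring
end
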